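/- Let γ > 0 and let q ∈ L¹(ℝ;ℂ) with supp q ⊆ [0,γ]. Then for every λ ∈ ℂ with ε = Im λ, the function a satisfies |a(λ)| ≤ exp(γ(|ε| − ε))·cosh(‖q‖₁), where ‖q‖₁ = ∫_ℝ |q(x)| dx. -/

import Mathlib

/-!
Each `a_n(λ)` is an integral over the ordered simplex `0 < t₁ < ⋯ < t_{2n} < γ`. On it the
intervals `(t_{2j-1}, t_{2j})` are disjoint subintervals of `(0, γ)`, so their total length `D`
lies in `[0, γ]` and `|∏ exp(2iλ(t_{2j} - t_{2j-1}))| = exp(-2εD) ≤ exp(γ(|ε| - ε))`.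
What remains is `∏ |q(tᵢ)|`; the `(2n)!` orderings of the coordinates cut `ℝ^{2n}` into
disjoint pieces over which it has the same integral, so its integral over the simplex is at
most `‖q‖₁^{2n} / (2n)!`. Summing over `n` gives the even part of the exponential series,
`cosh ‖q‖₁`.
-/

open MeasureTheory Complex Real Filter

/-- The `n`-th simplex integral `a_n(λ)` in the iteration series for the inverse
transmission coefficient of the 1D massless Dirac operator with potential `q`. -/
noncomputable def aCoeff (γ : ℝ) (q : ℝ → ℂ) (n : ℕ) (l : ℂ) : ℂ :=
  ∫ t : Fin (2 * n) → ℝ in {t | StrictMono t ∧ ∀ i, t i ∈ Set.Ioo 0 γ},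
    ∏ j : Fin n,
      q (t ⟨2 * (j : ℕ), by have := j.isLt; omega⟩) *
        (starRingEnd ℂ) (q (t ⟨2 * (j : ℕ) + 1, by have := j.isLt; omega⟩)) *
        Complex.exp (2 * Complex.I * l *
          (((t ⟨2 * (j : ℕ) + 1, by have := j.isLt; omega⟩) : ℝ)
            - (t ⟨2 * (j : ℕ), by have := j.isLt; omega⟩)))

/-- The function `a(λ) = 1 + Σ_{n≥1} a_n(λ)`. -/
noncomputable def diracA (γ : ℝ) (q : ℝ → ℂ) (l : ℂ) : ℂ :=
  1 + ∑' n : ℕ, aCoeff γ q (n + 1) l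

open scoped Nat

lemma prod_fin_two_mul_eq_prod_pairs {M : Type*} [CommMonoid M] {n : ℕ}
    (g : Fin (2 * n) → M) :
    ∏ i, g i = ∏ j : Fin n, g ⟨2 * j, by omega⟩ * g ⟨2 * j + 1, by omega⟩ := by
  rw [← (finProdFinEquiv.trans (finCongr (Nat.mul_comm n 2))).prod_comp, Fintype.prod_prod_type]
  refine Finset.prod_congr rfl fun j _ => ?_
  rw [Fin.prod_univ_two]
  congr 2 <;> ext <;> simp [finProdFinEquiv, mul_comm, add_comm]

lemma sum_pair_gaps_le {n : ℕ} {t : Fin (2 * n) → ℝ} (ht : Monotone t) {a b : ℝ}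
    (hab : a ≤ b) (hmem : ∀ i, t i ∈ Set.Icc a b) :
    ∑ j : Fin n, (t ⟨2 * j + 1, by omega⟩ - t ⟨2 * j, by omega⟩) ≤ b - a := by
  induction n generalizing b with
  | zero => simpa using hab
  | succ n ih =>
    have hinit := ih (t := fun i : Fin (2 * n) => t ⟨i, by omega⟩) (b := t ⟨2 * n, by omega⟩)
      (fun i j h => ht (Fin.mk_le_mk.2 h)) (hmem _).1
      fun i => ⟨(hmem _).1, ht (Fin.mk_le_mk.2 (by omega))⟩
    rw [Fin.sum_univ_castSucc]
    simp only [Fin.val_castSucc, Fin.val_last] at hinit ⊢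
    linarith [(hmem ⟨2 * n + 1, by omega⟩).2]

section OrderedSimplex

variable {k : ℕ}

lemma measurableSet_setOf_strictMono : MeasurableSet {t : Fin k → ℝ | StrictMono t} := by
  simp only [StrictMono, Set.ofPred_forall]
  exact .iInter fun i => .iInter fun j => .iInter fun _ =>
    measurableSet_lt (measurable_pi_apply i) (measurable_pi_apply j)

lemma pairwise_disjoint_setOf_strictMono_comp :
    Pairwise fun σ τ : Equiv.Perm (Fin k) =>
      Disjoint {t : Fin k → ℝ | StrictMono (t ∘ σ)} {t | StrictMono (t ∘ τ)} := by
  intro σ τ hne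
  refine Set.disjoint_left.2 fun t hσ hτ => hne ?_
  have hinj : Function.Injective t := by
    simpa [Function.comp_assoc] using hσ.injective.comp σ.symm.injective
  exact Equiv.ext fun i => hinj (congrFun (Tuple.unique_monotone hσ.monotone hτ.monotone) i)

lemma setIntegral_strictMono_comp_perm (f : ℝ → ℝ) (σ : Equiv.Perm (Fin k)) :
    ∫ t in {t : Fin k → ℝ | StrictMono (t ∘ σ)}, ∏ i, f (t i) =
      ∫ t in {t : Fin k → ℝ | StrictMono t}, ∏ i, f (t i) := by
  have hσ := volume_preserving_arrowCongr' (α₁ := Fin k) σ.symm (.refl ℝ) (.id volume)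
  rw [← hσ.setIntegral_preimage_emb (MeasurableEquiv.measurableEmbedding _) _ {t | StrictMono t}]
  congr 1
  ext t
  exact (Equiv.prod_comp σ _).symm

variable {f : ℝ → ℝ}

lemma factorial_mul_setIntegral_strictMono_le (hf : Integrable f) (hf0 : 0 ≤ f) :
    k ! * ∫ t in {t : Fin k → ℝ | StrictMono t}, ∏ i, f (t i) ≤ (∫ x, f x) ^ k := by
  have hint : Integrable fun t : Fin k → ℝ => ∏ i, f (t i) := .fintype_prod fun _ => hf
  calc (k ! : ℝ) * ∫ t in {t : Fin k → ℝ | StrictMono t}, ∏ i, f (t i)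
      = ∑ σ : Equiv.Perm (Fin k),
          ∫ t in {t : Fin k → ℝ | StrictMono (t ∘ σ)}, ∏ i, f (t i) := by
        simp [setIntegral_strictMono_comp_perm, Fintype.card_perm]
    _ = ∫ t in ⋃ σ : Equiv.Perm (Fin k), {t : Fin k → ℝ | StrictMono (t ∘ σ)}, ∏ i, f (t i) :=
        (integral_iUnion_fintype (fun σ => measurableSet_setOf_strictMono.preimage
          (measurable_pi_lambda _ fun i => measurable_pi_apply (σ i)))
          pairwise_disjoint_setOf_strictMono_comp fun _ => hint.integrableOn).symm
    _ ≤ ∫ t : Fin k → ℝ, ∏ i, f (t i) :=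
        setIntegral_le_integral hint (.of_forall fun t => Finset.prod_nonneg fun i _ => hf0 _)
    _ = (∫ x, f x) ^ k := by rw [volume_pi, integral_fintype_prod_eq_pow, Fintype.card_fin]

lemma setIntegral_prod_le_of_subset_strictMono (hf : Integrable f) (hf0 : 0 ≤ f)
    {s : Set (Fin k → ℝ)} (hs : s ⊆ {t | StrictMono t}) :
    ∫ t in s, ∏ i, f (t i) ≤ (∫ x, f x) ^ k / k ! := by
  have hsub : ∫ t in s, ∏ i, f (t i) ≤ ∫ t in {t : Fin k → ℝ | StrictMono t}, ∏ i, f (t i) :=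
    setIntegral_mono_set (Integrable.fintype_prod fun _ => hf).integrableOn
      (.of_forall fun t => Finset.prod_nonneg fun i _ => hf0 _) (.of_forall hs)
  rw [le_div_iff₀ (by positivity), mul_comm]
  exact (mul_le_mul_of_nonneg_left hsub (by positivity)).trans
    (factorial_mul_setIntegral_strictMono_le hf hf0)

end OrderedSimplex

noncomputable def pairIntegrand (q : ℝ → ℂ) (l : ℂ) {n : ℕ} (t : Fin (2 * n) → ℝ) : ℂ :=
  ∏ j : Fin n,
    q (t ⟨2 * j, by omega⟩) * (starRingEnd ℂ) (q (t ⟨2 * j + 1, by omega⟩)) *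
      Complex.exp (2 * Complex.I * l * ((t ⟨2 * j + 1, by omega⟩ : ℂ) - t ⟨2 * j, by omega⟩))

lemma aCoeff_eq_setIntegral_pairIntegrand (γ : ℝ) (q : ℝ → ℂ) (n : ℕ) (l : ℂ) :
    aCoeff γ q n l =
      ∫ t in {t : Fin (2 * n) → ℝ | StrictMono t ∧ ∀ i, t i ∈ Set.Ioo 0 γ}, pairIntegrand q l t :=
  rfl

lemma norm_pairIntegrand (q : ℝ → ℂ) (l : ℂ) {n : ℕ} (t : Fin (2 * n) → ℝ) :
    ‖pairIntegrand q l t‖ = (∏ i, ‖q (t i)‖) *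
      Real.exp (-2 * l.im * ∑ j : Fin n, (t ⟨2 * j + 1, by omega⟩ - t ⟨2 * j, by omega⟩)) := by
  rw [pairIntegrand, norm_prod, prod_fin_two_mul_eq_prod_pairs, Finset.mul_sum, Real.exp_sum,
    ← Finset.prod_mul_distrib]
  refine Finset.prod_congr rfl fun j _ => ?_
  rw [norm_mul, norm_mul, RCLike.norm_conj, Complex.norm_exp]
  congr 2
  simp [Complex.mul_re]

lemma neg_two_mul_mul_le_mul_abs_sub {ε D γ : ℝ} (hD0 : 0 ≤ D) (hDγ : D ≤ γ) :
    -2 * ε * D ≤ γ * (|ε| - ε) := by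
  rcases abs_cases ε with ⟨h, hε⟩ | ⟨h, hε⟩ <;> rw [h] <;> nlinarith

lemma norm_pairIntegrand_le (q : ℝ → ℂ) (l : ℂ) {γ : ℝ} (hγ : 0 ≤ γ) {n : ℕ}
    {t : Fin (2 * n) → ℝ} (ht : StrictMono t) (hmem : ∀ i, t i ∈ Set.Ioo 0 γ) :
    ‖pairIntegrand q l t‖ ≤ Real.exp (γ * (|l.im| - l.im)) * ∏ i, ‖q (t i)‖ := by
  have hgaps_nonneg : 0 ≤ ∑ j : Fin n, (t ⟨2 * j + 1, by omega⟩ - t ⟨2 * j, by omega⟩) :=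
    Finset.sum_nonneg fun j _ => sub_nonneg.2 (ht.monotone (Fin.mk_le_mk.2 (by omega)))
  have hgaps_le := sub_zero γ ▸
    sum_pair_gaps_le ht.monotone hγ fun i => Set.Ioo_subset_Icc_self (hmem i)
  rw [norm_pairIntegrand, mul_comm]
  exact mul_le_mul_of_nonneg_right
    (Real.exp_le_exp.2 (neg_two_mul_mul_le_mul_abs_sub hgaps_nonneg hgaps_le))
    (Finset.prod_nonneg fun _ _ => norm_nonneg _)

lemma norm_aCoeff_le {γ : ℝ} (hγ : 0 ≤ γ) {q : ℝ → ℂ} (hq : Integrable q) (l : ℂ) (n : ℕ) :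
    ‖aCoeff γ q n l‖ ≤
      Real.exp (γ * (|l.im| - l.im)) * ((∫ x, ‖q x‖) ^ (2 * n) / (2 * n) !) := by
  set S := {t : Fin (2 * n) → ℝ | StrictMono t ∧ ∀ i, t i ∈ Set.Ioo 0 γ}
  have hbox : MeasurableSet {t : Fin (2 * n) → ℝ | ∀ i, t i ∈ Set.Ioo 0 γ} := by
    measurability
  have hS : MeasurableSet S := measurableSet_setOf_strictMono.inter hbox
  have hint : Integrable fun t : Fin (2 * n) → ℝ => ∏ i, ‖q (t i)‖ :=
    .fintype_prod fun _ => hq.norm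
  rw [aCoeff_eq_setIntegral_pairIntegrand]
  calc ‖∫ t in S, pairIntegrand q l t‖
      ≤ ∫ t in S, Real.exp (γ * (|l.im| - l.im)) * ∏ i, ‖q (t i)‖ :=
        norm_integral_le_of_norm_le (hint.const_mul _).integrableOn <|
          (ae_restrict_iff' hS).2 <|
            .of_forall fun t ht => norm_pairIntegrand_le q l hγ ht.1 ht.2
    _ = Real.exp (γ * (|l.im| - l.im)) * ∫ t in S, ∏ i, ‖q (t i)‖ := integral_const_mul _ _
    _ ≤ Real.exp (γ * (|l.im| - l.im)) * ((∫ x, ‖q x‖) ^ (2 * n) / (2 * n) !) := by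
        gcongr
        exact setIntegral_prod_le_of_subset_strictMono hq.norm (fun _ => norm_nonneg _)
          fun _ ht => ht.1

lemma norm_one_add_tsum_le_mul_cosh {E : Type*} [SeminormedRing E] [NormOneClass E]
    {a : ℕ → E} {B C : ℝ} (hC : 1 ≤ C)
    (ha : ∀ n, ‖a n‖ ≤ C * (B ^ (2 * (n + 1)) / (2 * (n + 1)) !)) :
    ‖1 + ∑' n, a n‖ ≤ C * Real.cosh B := by
  have htail : HasSum (fun n => B ^ (2 * (n + 1)) / (2 * (n + 1)) !) (Real.cosh B - 1) := by
    simpa using (hasSum_nat_add_iff' 1).2 (Real.hasSum_cosh B)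
  calc ‖1 + ∑' n, a n‖ ≤ 1 + C * (Real.cosh B - 1) := by
        refine (norm_add_le _ _).trans ?_
        rw [norm_one]
        gcongr
        exact tsum_of_norm_bounded (htail.mul_left C) ha
    _ ≤ C * Real.cosh B := by linarith

theorem diracA_bound_general (γ : ℝ) (hγ : 0 < γ) (q : ℝ → ℂ)
    (hq : Integrable q) (l : ℂ) :
    ‖diracA γ q l‖ ≤
      Real.exp (γ * (|l.im| - l.im)) * Real.cosh (∫ x : ℝ, ‖q x‖) :=
  norm_one_add_tsum_le_mul_cosh (one_le_exp (mul_nonneg hγ.le (sub_nonneg.2 (le_abs_self _))))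
    fun n => norm_aCoeff_le hγ.le hq l (n + 1)

/-- Bound on the function `a`: `|a(λ)| ≤ exp(γ(|ε| − ε))·cosh(‖q‖₁)` where `ε = Im λ`. -/
theorem diracA_bound (γ : ℝ) (hγ : 0 < γ) (q : ℝ → ℂ)
    (hq : Integrable q) (hsupp : Function.support q ⊆ Set.Icc 0 γ) (l : ℂ) :
    ‖diracA γ q l‖ ≤
      Real.exp (γ * (|l.im| - l.im)) * Real.cosh (∫ x : ℝ, ‖q x‖) :=
  diracA_bound_general γ hγ q hq l
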